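/- arXiv:1411.5616 — 10 statements merged into one kernel-verified Lean document; each statement's English description precedes it below -/
import Mathlib

section
/- If f : ℝ → ℝ is differentiable at t > 0 and 0 < α ≤ 1, then the conformable fractional derivative D^α f(t) := lim_{ε→0} (f(t·e^{ε t^{-α}}) − f(t))/ε exists and equals t^{1−α} f'(t). -/
/-! The difference quotient is the slope at `0` of `ε ↦ f (t e^{ε t^{-α}})`. The curve
`ε ↦ t e^{ε t^{-α}}` passes through `t` with velocity `t · t^{-α} = t^{1-α}`, so by the chain rule
that slope tends to `t^{1-α} f'(t)`. -/

open Real Filter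

theorem hasDerivAt_comp_mul_exp_mul {f : ℝ → ℝ} {f' t : ℝ} (hf : HasDerivAt f f' t) (c : ℝ) :
    HasDerivAt (fun ε : ℝ => f (t * exp (ε * c))) (t * c * f') 0 := by
  have hcurve : HasDerivAt (fun ε : ℝ => t * exp (ε * c)) (t * c) 0 := by
    simpa using (((hasDerivAt_id (0 : ℝ)).mul_const c).exp).const_mul t
  have hf₀ : HasDerivAt f f' (t * exp (0 * c)) := by simpa using hf
  exact (hf₀.comp 0 hcurve).congr_deriv (mul_comm _ _)

theorem conformable_deriv_eq_general (f : ℝ → ℝ) (t α f' : ℝ) (ht : 0 < t)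
    (hf : HasDerivAt f f' t) :
    Filter.Tendsto (fun ε : ℝ => (f (t * Real.exp (ε * t ^ (-α))) - f t) / ε)
      (nhdsWithin 0 {(0:ℝ)}ᶜ) (nhds (t ^ (1 - α) * f')) := by
  have hpow : t ^ (1 - α) = t * t ^ (-α) := by rw [sub_eq_add_neg, rpow_add ht, rpow_one]
  rw [hpow]
  refine (hasDerivAt_comp_mul_exp_mul hf (t ^ (-α))).tendsto_slope_zero.congr fun ε => ?_
  simp [div_eq_inv_mul]

theorem conformable_deriv_eq (f : ℝ → ℝ) (t α f' : ℝ) (ht : 0 < t)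
    (hα : 0 < α) (hα1 : α ≤ 1) (hf : HasDerivAt f f' t) :
    Filter.Tendsto (fun ε : ℝ => (f (t * Real.exp (ε * t ^ (-α))) - f t) / ε)
      (nhdsWithin 0 {(0:ℝ)}ᶜ) (nhds (t ^ (1 - α) * f')) :=
  conformable_deriv_eq_general f t α f' ht hf
end

section
/- Let 0 < α ≤ 1, γ, δ, η, ζ ≥ 0 with d := ηδ + γζ + γη/α > 0, and let G(t,s) be defined by G(t,s) = (1/d)[δ + (γ/α)t^α][ζ + (η/α)(1 − s^α)] for t ≤ s and G(t,s) = (1/d)[δ + (γ/α)s^α][ζ + (η/α)(1 − t^α)] for s ≤ t. Then G(t,s) ≤ G(s,s) for all t, s ∈ [0,1]. -/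
/-!
Writing `u x = δ + (γ/α) x^α` and `v x = ζ + (η/α)(1 - x^α)`, we have
`G t s = u (min t s) * v (max t s) / d` with `u` nondecreasing and `v` nonincreasing, both
nonnegative on `[0, 1]`. Moving `t` to `s` can only increase the smaller argument of `u` and
decrease the larger argument of `v`, so it can only increase `G`.
-/

open Real Set

theorem ite_le_eq_min_max {ι R : Type*} [LinearOrder ι] (f : ι → ι → R) (t s : ι) :
    (if t ≤ s then f t s else f s t) = f (min t s) (max t s) := by
  rcases le_total t s with h | h
  · simp [h]
  · rcases h.eq_or_lt with rfl | h
    · simp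
    · simp [h.not_ge, h.le]

theorem MonotoneOn.mul_min_max_le_of_antitoneOn {ι R : Type*} [LinearOrder ι] [Semiring R]
    [PartialOrder R] [IsOrderedRing R] {S : Set ι} {u v : ι → R}
    (hu : MonotoneOn u S) (hv : AntitoneOn v S) (hu0 : ∀ x ∈ S, 0 ≤ u x)
    (hv0 : ∀ x ∈ S, 0 ≤ v x) {t s : ι} (ht : t ∈ S) (hs : s ∈ S) :
    u (min t s) * v (max t s) ≤ u s * v s := by
  rcases le_total t s with h | h
  · rw [min_eq_left h, max_eq_right h]
    exact mul_le_mul_of_nonneg_right (hu ht hs h) (hv0 s hs)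
  · rw [min_eq_right h, max_eq_left h]
    exact mul_le_mul_of_nonneg_left (hv hs ht h) (hu0 s hs)

theorem monotoneOn_add_mul_rpow {a b p : ℝ} (hb : 0 ≤ b) (hp : 0 ≤ p) :
    MonotoneOn (fun x : ℝ => a + b * x ^ p) (Ici 0) := fun _ hx _ _ hxy =>
  add_le_add_right (mul_le_mul_of_nonneg_left (rpow_le_rpow hx hxy hp) hb) a

theorem antitoneOn_add_mul_one_sub_rpow {a b p : ℝ} (hb : 0 ≤ b) (hp : 0 ≤ p) :
    AntitoneOn (fun x : ℝ => a + b * (1 - x ^ p)) (Ici 0) := fun _ hx _ _ hxy =>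
  add_le_add_right
    (mul_le_mul_of_nonneg_left (sub_le_sub_left (rpow_le_rpow hx hxy hp) 1) hb) a

theorem green_two_point_upper_general (α γ δ η ζ : ℝ) (hα : 0 < α)
    (hγ : 0 ≤ γ) (hδ : 0 ≤ δ) (hη : 0 ≤ η) (hζ : 0 ≤ ζ)
    (G : ℝ → ℝ → ℝ)
    (hG : ∀ t s, G t s =
      if t ≤ s then
        (1 / (η * δ + γ * ζ + γ * η / α)) * (δ + (γ / α) * t ^ α) *
          (ζ + (η / α) * (1 - s ^ α))
      else
        (1 / (η * δ + γ * ζ + γ * η / α)) * (δ + (γ / α) * s ^ α) *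
          (ζ + (η / α) * (1 - t ^ α))) :
    ∀ t ∈ Set.Icc (0:ℝ) 1, ∀ s ∈ Set.Icc (0:ℝ) 1, G t s ≤ G s s := by
  intro t ht s hs
  set c := 1 / (η * δ + γ * ζ + γ * η / α)
  set u : ℝ → ℝ := fun x => δ + (γ / α) * x ^ α
  set v : ℝ → ℝ := fun x => ζ + (η / α) * (1 - x ^ α)
  have hG' : ∀ t s, G t s = c * (u (min t s) * v (max t s)) := fun t s =>
    ((hG t s).trans (ite_le_eq_min_max (fun x y => c * u x * v y) t s)).trans (mul_assoc ..)
  have hu0 : ∀ x ∈ Icc (0:ℝ) 1, 0 ≤ u x := fun x hx =>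
    add_nonneg hδ (mul_nonneg (by positivity) (rpow_nonneg hx.1 α))
  have hv0 : ∀ x ∈ Icc (0:ℝ) 1, 0 ≤ v x := fun x hx =>
    add_nonneg hζ (mul_nonneg (by positivity) (sub_nonneg.2 (rpow_le_one hx.1 hx.2 hα.le)))
  have key := MonotoneOn.mul_min_max_le_of_antitoneOn
    ((monotoneOn_add_mul_rpow (by positivity) hα.le).mono Icc_subset_Ici_self)
    ((antitoneOn_add_mul_one_sub_rpow (by positivity) hα.le).mono Icc_subset_Ici_self)
    hu0 hv0 ht hs
  rw [hG', hG', min_self, max_self]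
  exact mul_le_mul_of_nonneg_left key (by positivity)

theorem green_two_point_upper (α γ δ η ζ : ℝ) (hα : 0 < α) (hα1 : α ≤ 1)
    (hγ : 0 ≤ γ) (hδ : 0 ≤ δ) (hη : 0 ≤ η) (hζ : 0 ≤ ζ)
    (hd : 0 < η * δ + γ * ζ + γ * η / α)
    (G : ℝ → ℝ → ℝ)
    (hG : ∀ t s, G t s =
      if t ≤ s then
        (1 / (η * δ + γ * ζ + γ * η / α)) * (δ + (γ / α) * t ^ α) *
          (ζ + (η / α) * (1 - s ^ α))
      else
        (1 / (η * δ + γ * ζ + γ * η / α)) * (δ + (γ / α) * s ^ α) *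
          (ζ + (η / α) * (1 - t ^ α))) :
    ∀ t ∈ Set.Icc (0:ℝ) 1, ∀ s ∈ Set.Icc (0:ℝ) 1, G t s ≤ G s s :=
  green_two_point_upper_general α γ δ η ζ hα hγ hδ hη hζ G hG
end

section
/- Let 0 < α ≤ 1, γ, δ, η, ζ ≥ 0 with d := ηδ + γζ + γη/α > 0, and let G(t,s) be as in the two-point Green's function: G(t,s) = (1/d)[δ + (γ/α)t^α][ζ + (η/α)(1 − s^α)] for t ≤ s and symmetrically for s ≤ t. Define g(t) := min{(αδ + γt^α)/(αδ + γ), (αζ + η(1 − t^α))/(αζ + η)}. Then g(t)·G(s,s) ≤ G(t,s) for all t, s ∈ [0,1]. -/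
/-!
Write `u = t^α`, `v = s^α` and `A x = αδ + γx`, `B x = αζ + η(1 - x)`, so that
`α² d · G(t,s) = A(u) B(v)` for `t ≤ s` and `A(v) B(u)` for `s ≤ t`, while
`g(t) = min (A(u)/A(1)) (B(u)/B(0))`. Since `A` increases and `B` decreases on `[0,1]`,
for `t ≤ s` we get `g(t) A(v) ≤ g(t) A(1) ≤ A(u)`, and for `s < t`
`g(t) B(v) ≤ g(t) B(0) ≤ B(u)`; multiplying by the common factor gives the claim.
-/

open Real

lemma mul_le_of_le_div_of_le {m a b c : ℝ} (hm : 0 ≤ m) (hb : 0 < b) (hmab : m ≤ a / b)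
    (hcb : c ≤ b) : m * c ≤ a :=
  (mul_le_mul_of_nonneg_left hcb hm).trans ((le_div_iff₀ hb).mp hmab)

lemma add_div_mul_eq_div {α : ℝ} (hα : α ≠ 0) (a b x : ℝ) :
    a + b / α * x = (α * a + b * x) / α := by
  field_simp

/-- `α d = (αζ + η)(αδ + γ) - α²ζδ`, so `d > 0` forces both boundary factors to be positive. -/
lemma two_point_boundary_factors_pos {α γ δ η ζ : ℝ} (hα : 0 < α) (hγ : 0 ≤ γ) (hδ : 0 ≤ δ)
    (hη : 0 ≤ η) (hζ : 0 ≤ ζ) (hd : 0 < η * δ + γ * ζ + γ * η / α) :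
    0 < α * δ + γ ∧ 0 < α * ζ + η := by
  have hαd : α * (η * δ + γ * ζ + γ * η / α) = α * η * δ + α * γ * ζ + γ * η := by
    field_simp
  have hprod : 0 < (α * δ + γ) * (α * ζ + η) := by
    nlinarith [mul_pos hα hd, mul_nonneg (mul_nonneg (mul_nonneg hα.le hα.le) hζ) hδ]
  exact ⟨pos_of_mul_pos_left hprod (by positivity), pos_of_mul_pos_right hprod (by positivity)⟩

theorem green_two_point_lower_general (α γ δ η ζ : ℝ) (hα : 0 < α)
    (hγ : 0 ≤ γ) (hδ : 0 ≤ δ) (hη : 0 ≤ η) (hζ : 0 ≤ ζ)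
    (hd : 0 < η * δ + γ * ζ + γ * η / α)
    (G : ℝ → ℝ → ℝ)
    (hG : ∀ t s, G t s =
      if t ≤ s then
        (1 / (η * δ + γ * ζ + γ * η / α)) * (δ + (γ / α) * t ^ α) *
          (ζ + (η / α) * (1 - s ^ α))
      else
        (1 / (η * δ + γ * ζ + γ * η / α)) * (δ + (γ / α) * s ^ α) *
          (ζ + (η / α) * (1 - t ^ α)))
    (g : ℝ → ℝ)
    (hg : ∀ t, g t = min ((α * δ + γ * t ^ α) / (α * δ + γ))
        ((α * ζ + η * (1 - t ^ α)) / (α * ζ + η))) :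
    ∀ t ∈ Set.Icc (0:ℝ) 1, ∀ s ∈ Set.Icc (0:ℝ) 1, g t * G s s ≤ G t s := by
  rintro t ⟨ht0, ht1⟩ s ⟨hs0, hs1⟩
  obtain ⟨hA1, hB0⟩ := two_point_boundary_factors_pos hα hγ hδ hη hζ hd
  have hu1 : t ^ α ≤ 1 := rpow_le_one ht0 ht1 hα.le
  have hv0 : 0 ≤ s ^ α := rpow_nonneg hs0 α
  have hv1 : s ^ α ≤ 1 := rpow_le_one hs0 hs1 hα.le
  have hg0 : 0 ≤ g t := hg t ▸ le_min (by positivity) (div_nonneg (by nlinarith) hB0.le)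
  set k := 1 / (η * δ + γ * ζ + γ * η / α) / α / α
  have hk : 0 ≤ k := by positivity
  rw [hG, hG, if_pos le_rfl]
  simp only [add_div_mul_eq_div hα.ne', mul_div_assoc']
  split_ifs with hts
  · have hA : g t * (α * δ + γ * s ^ α) ≤ α * δ + γ * t ^ α :=
      mul_le_of_le_div_of_le hg0 hA1 (hg t ▸ min_le_left _ _) (by nlinarith)
    calc _ = g t * (α * δ + γ * s ^ α) * ((α * ζ + η * (1 - s ^ α)) * k) := by ring
      _ ≤ (α * δ + γ * t ^ α) * ((α * ζ + η * (1 - s ^ α)) * k) := by gcongr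
      _ = _ := by ring
  · have hB : g t * (α * ζ + η * (1 - s ^ α)) ≤ α * ζ + η * (1 - t ^ α) :=
      mul_le_of_le_div_of_le hg0 hB0 (hg t ▸ min_le_right _ _) (by nlinarith)
    calc _ = g t * (α * ζ + η * (1 - s ^ α)) * ((α * δ + γ * s ^ α) * k) := by ring
      _ ≤ (α * ζ + η * (1 - t ^ α)) * ((α * δ + γ * s ^ α) * k) := by gcongr
      _ = _ := by ring

theorem green_two_point_lower (α γ δ η ζ : ℝ) (hα : 0 < α) (hα1 : α ≤ 1)
    (hγ : 0 ≤ γ) (hδ : 0 ≤ δ) (hη : 0 ≤ η) (hζ : 0 ≤ ζ)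
    (hd : 0 < η * δ + γ * ζ + γ * η / α)
    (G : ℝ → ℝ → ℝ)
    (hG : ∀ t s, G t s =
      if t ≤ s then
        (1 / (η * δ + γ * ζ + γ * η / α)) * (δ + (γ / α) * t ^ α) *
          (ζ + (η / α) * (1 - s ^ α))
      else
        (1 / (η * δ + γ * ζ + γ * η / α)) * (δ + (γ / α) * s ^ α) *
          (ζ + (η / α) * (1 - t ^ α)))
    (g : ℝ → ℝ)
    (hg : ∀ t, g t = min ((α * δ + γ * t ^ α) / (α * δ + γ))
        ((α * ζ + η * (1 - t ^ α)) / (α * ζ + η))) :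
    ∀ t ∈ Set.Icc (0:ℝ) 1, ∀ s ∈ Set.Icc (0:ℝ) 1, g t * G s s ≤ G t s :=
  green_two_point_lower_general α γ δ η ζ hα hγ hδ hη hζ hd G hG g hg
end

section
/- Let 0 < α, β ≤ 1 and define the Cauchy function x(t,s) = [α t^α (t^β − s^β) + β s^β (s^α − t^α)] / (αβ(α+β)). Then x(s,s) = 0 and ∂x/∂t(t,s) = t^{α−1}(t^β − s^β)/β ≥ 0 for t ≥ s > 0; hence x(t,s) ≥ 0 for all 0 < s ≤ t ≤ 1. -/
/-!
Since `x(s, s) = 0` and `t ↦ x(t, s)` has the nonnegative derivative `t^(α-1) (t^β - s^β) / β`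
on `[s, ∞)`, the function is monotone there and hence nonnegative.
-/

open Real Set

noncomputable def cauchyFn (α β t s : ℝ) : ℝ :=
  (α * t ^ α * (t ^ β - s ^ β) + β * s ^ β * (s ^ α - t ^ α)) / (α * β * (α + β))

section

variable {α β : ℝ}

@[simp]
theorem cauchyFn_self (s : ℝ) : cauchyFn α β s s = 0 := by
  simp [cauchyFn]

theorem hasDerivAt_cauchyFn (hα : α ≠ 0) (hαβ : α + β ≠ 0) {s t : ℝ} (ht : 0 < t) :
    HasDerivAt (fun τ => cauchyFn α β τ s) (t ^ (α - 1) * (t ^ β - s ^ β) / β) t := by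
  have hpowα : HasDerivAt (fun τ : ℝ => τ ^ α) (α * t ^ (α - 1)) t :=
    hasDerivAt_rpow_const (Or.inl ht.ne')
  have hpowβ : HasDerivAt (fun τ : ℝ => τ ^ β) (β * t ^ (β - 1)) t :=
    hasDerivAt_rpow_const (Or.inl ht.ne')
  have hnum := ((hpowα.const_mul α).mul (hpowβ.sub_const (s ^ β))).add
    (((hasDerivAt_const t (s ^ α)).sub hpowα).const_mul (β * s ^ β))
  refine (hnum.div_const (α * β * (α + β))).congr_deriv ?_
  have hshift : t ^ α * t ^ (β - 1) = t ^ (α - 1) * t ^ β := by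
    rw [← rpow_add ht, ← rpow_add ht]; ring_nf
  rcases eq_or_ne β 0 with rfl | hβ
  · simp
  · field_simp
    linear_combination (α * β) * hshift

theorem cauchyFn_deriv_nonneg (hβ : 0 ≤ β) {s t : ℝ} (hs : 0 ≤ s) (hst : s ≤ t) :
    0 ≤ t ^ (α - 1) * (t ^ β - s ^ β) / β :=
  div_nonneg (mul_nonneg (rpow_nonneg (hs.trans hst) _)
    (sub_nonneg.2 (rpow_le_rpow hs hst hβ))) hβ

theorem cauchyFn_nonneg (hα : 0 < α) (hβ : 0 < β) {s t : ℝ} (hs : 0 < s) (hst : s ≤ t) :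
    0 ≤ cauchyFn α β t s := by
  have hderiv : ∀ τ ∈ Ici s,
      HasDerivAt (fun τ => cauchyFn α β τ s) (τ ^ (α - 1) * (τ ^ β - s ^ β) / β) τ :=
    fun τ hτ => hasDerivAt_cauchyFn hα.ne' (by positivity) (hs.trans_le hτ)
  have hmono : MonotoneOn (fun τ => cauchyFn α β τ s) (Ici s) :=
    monotoneOn_of_hasDerivWithinAt_nonneg (convex_Ici s)
      (fun τ hτ => (hderiv τ hτ).continuousAt.continuousWithinAt)
      (fun τ hτ => (hderiv τ (interior_subset hτ)).hasDerivWithinAt)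
      (fun τ hτ => cauchyFn_deriv_nonneg hβ.le hs.le (interior_subset hτ))
  simpa using hmono (mem_Ici.2 le_rfl) hst hst

end

theorem cauchy_fn_nonneg_general (α β : ℝ) (hα : 0 < α)
    (hβ : 0 < β)
    (x : ℝ → ℝ → ℝ)
    (hx : ∀ t s, x t s =
      (α * t ^ α * (t ^ β - s ^ β) + β * s ^ β * (s ^ α - t ^ α)) /
        (α * β * (α + β))) :
    (∀ s : ℝ, x s s = 0) ∧
    (∀ s t : ℝ, 0 < s → s ≤ t →
      HasDerivAt (fun τ => x τ s) (t ^ (α - 1) * (t ^ β - s ^ β) / β) t ∧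
      0 ≤ t ^ (α - 1) * (t ^ β - s ^ β) / β) ∧
    (∀ s t : ℝ, 0 < s → s ≤ t → t ≤ 1 → 0 ≤ x t s) := by
  obtain rfl : x = cauchyFn α β := funext₂ hx
  refine ⟨cauchyFn_self, fun s t hs hst => ⟨?_, ?_⟩, fun s t hs hst _ => ?_⟩
  · exact hasDerivAt_cauchyFn hα.ne' (by positivity) (hs.trans_le hst)
  · exact cauchyFn_deriv_nonneg hβ.le hs.le hst
  · exact cauchyFn_nonneg hα hβ hs hst

theorem cauchy_fn_nonneg (α β : ℝ) (hα : 0 < α) (hα1 : α ≤ 1)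
    (hβ : 0 < β) (hβ1 : β ≤ 1)
    (x : ℝ → ℝ → ℝ)
    (hx : ∀ t s, x t s =
      (α * t ^ α * (t ^ β - s ^ β) + β * s ^ β * (s ^ α - t ^ α)) /
        (α * β * (α + β))) :
    (∀ s : ℝ, x s s = 0) ∧
    (∀ s t : ℝ, 0 < s → s ≤ t →
      HasDerivAt (fun τ => x τ s) (t ^ (α - 1) * (t ^ β - s ^ β) / β) t ∧
      0 ≤ t ^ (α - 1) * (t ^ β - s ^ β) / β) ∧
    (∀ s t : ℝ, 0 < s → s ≤ t → t ≤ 1 → 0 ≤ x t s) :=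
  cauchy_fn_nonneg_general α β hα hβ x hx
end

section
/- Let 0 < α, β ≤ 1 and 0 < τ < 1 with τ^β > α/(α+β). Define G(t,s) by: for s ∈ [0,τ], G(t,s) = u(t,s) if t ≤ s and G(t,s) = s^{α+β}/(α(α+β)) if s ≤ t; for s ∈ [τ,1], G(t,s) = u(t,τ) if t ≤ s and G(t,s) = u(t,τ) + x(t,s) if s ≤ t, where u(t,s) = [(α+β)t^α s^β − α t^{α+β}]/(αβ(α+β)) and x(t,s) = [α t^α(t^β − s^β) + β s^β(s^α − t^α)]/(αβ(α+β)). Then 0 < G(t,s) ≤ G(τ,s) for all t ∈ (0,1] and s ∈ (0,1]. -/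
open Real

/-!
Weighted AM–GM, `(α + β) t^α s^β ≤ α t^(α+β) + β s^(α+β)`, says that `u(·, s)` is maximal on
the diagonal, where it equals `s^(α+β) / (α (α+β))`; this settles the branch `s ≤ τ`. For `s > τ`,
`t > s` one has `x(t, s) = u(s, s) - u(t, s)`, and
`u(t, s) - u(t, τ) = (α+β) t^α (s^β - τ^β) / (α β (α+β))` increases with `t`. Comparing `t` with `s`
gives `G(t, s) ≤ u(s, τ) ≤ u(τ, τ)`; comparing `t` with `1` gives
`G(t, s) ≥ u(1, τ) + (u(s, s) - u(1, s)) > 0`, and `u(1, τ) > 0` is the hypothesis on `τ`.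
-/

theorem add_mul_rpow_mul_rpow_le {a b t s : ℝ} (ha : 0 ≤ a) (hb : 0 ≤ b) (ht : 0 ≤ t)
    (hs : 0 ≤ s) : (a + b) * (t ^ a * s ^ b) ≤ a * t ^ (a + b) + b * s ^ (a + b) := by
  rcases (add_nonneg ha hb).eq_or_lt with hab | hab
  · obtain ⟨rfl, rfl⟩ : a = 0 ∧ b = 0 := ⟨by linarith, by linarith⟩
    simp
  have hgm := geom_mean_le_arith_mean2_weighted (div_nonneg ha hab.le) (div_nonneg hb hab.le)
    (rpow_nonneg ht (a + b)) (rpow_nonneg hs (a + b)) (by field_simp)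
  rw [← rpow_mul ht, ← rpow_mul hs, mul_div_cancel₀ _ hab.ne', mul_div_cancel₀ _ hab.ne'] at hgm
  calc (a + b) * (t ^ a * s ^ b)
      ≤ (a + b) * (a / (a + b) * t ^ (a + b) + b / (a + b) * s ^ (a + b)) := by gcongr
    _ = a * t ^ (a + b) + b * s ^ (a + b) := by field_simp

noncomputable def rightFocalU (α β t s : ℝ) : ℝ :=
  ((α + β) * t ^ α * s ^ β - α * t ^ (α + β)) / (α * β * (α + β))

noncomputable def rightFocalX (α β t s : ℝ) : ℝ :=
  (α * t ^ α * (t ^ β - s ^ β) + β * s ^ β * (s ^ α - t ^ α)) / (α * β * (α + β))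

theorem rightFocalU_sub_rightFocalU (α β t s τ : ℝ) :
    rightFocalU α β t s - rightFocalU α β t τ
      = (α + β) * t ^ α * (s ^ β - τ ^ β) / (α * β * (α + β)) := by
  simp only [rightFocalU]; ring

theorem rightFocalX_eq_sub {α β t s : ℝ} (ht : 0 < t) (hs : 0 < s) :
    rightFocalX α β t s = rightFocalU α β s s - rightFocalU α β t s := by
  simp only [rightFocalX, rightFocalU, rpow_add ht, rpow_add hs]
  ring

section

variable {α β : ℝ} (hα : 0 < α) (hβ : 0 < β)
include hα hβ

theorem rightFocalU_self {s : ℝ} (hs : 0 < s) :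
    rightFocalU α β s s = s ^ (α + β) / (α * (α + β)) := by
  rw [rightFocalU, rpow_add hs]
  field_simp
  ring

theorem rightFocalU_le_self {t s : ℝ} (ht : 0 ≤ t) (hs : 0 < s) :
    rightFocalU α β t s ≤ rightFocalU α β s s := by
  have hamgm := add_mul_rpow_mul_rpow_le hα.le hβ.le ht hs.le
  calc rightFocalU α β t s ≤ β * s ^ (α + β) / (α * β * (α + β)) := by
        rw [rightFocalU]; gcongr; linarith
    _ = rightFocalU α β s s := by
        rw [rightFocalU_self hα hβ hs]; field_simp

theorem rightFocalU_pos {t s : ℝ} (ht : 0 < t) (h : α * t ^ β < (α + β) * s ^ β) :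
    0 < rightFocalU α β t s := by
  have hfactor : (α + β) * t ^ α * s ^ β - α * t ^ (α + β)
      = t ^ α * ((α + β) * s ^ β - α * t ^ β) := by
    rw [rpow_add ht]; ring
  rw [rightFocalU, hfactor]
  exact div_pos (mul_pos (rpow_pos_of_pos ht α) (by linarith)) (by positivity)

theorem rightFocalU_sub_rightFocalU_mono {t t' s τ : ℝ} (ht : 0 ≤ t) (htt' : t ≤ t')
    (hτ : 0 ≤ τ) (hτs : τ ≤ s) :
    rightFocalU α β t s - rightFocalU α β t τ ≤ rightFocalU α β t' s - rightFocalU α β t' τ := by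
  rw [rightFocalU_sub_rightFocalU, rightFocalU_sub_rightFocalU]
  have : τ ^ β ≤ s ^ β := rpow_le_rpow hτ hτs hβ.le
  have : t ^ α ≤ t' ^ α := rpow_le_rpow ht htt' hα.le
  gcongr

theorem rightFocalU_add_rightFocalX_bounds {t s τ : ℝ} (hτ : 0 < rightFocalU α β 1 τ)
    (hτ0 : 0 < τ) (hτs : τ ≤ s) (hst : s ≤ t) (ht1 : t ≤ 1) :
    0 < rightFocalU α β t τ + rightFocalX α β t s ∧
      rightFocalU α β t τ + rightFocalX α β t s ≤ rightFocalU α β τ τ := by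
  have hs : 0 < s := hτ0.trans_le hτs
  have ht : 0 < t := hs.trans_le hst
  rw [rightFocalX_eq_sub ht hs]
  constructor
  · have hmono := rightFocalU_sub_rightFocalU_mono hα hβ ht.le ht1 hτ0.le hτs
    have hdiag := rightFocalU_le_self hα hβ zero_le_one hs
    linarith
  · have hmono := rightFocalU_sub_rightFocalU_mono hα hβ hs.le hst hτ0.le hτs
    have hdiag := rightFocalU_le_self hα hβ hs.le hτ0
    linarith

end

theorem right_focal_green_bounds_general (α β τ : ℝ) (hα : 0 < α)
    (hβ : 0 < β) (hτ0 : 0 < τ)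
    (hτ : α / (α + β) < τ ^ β)
    (u x G : ℝ → ℝ → ℝ)
    (hu : ∀ t s, u t s =
      ((α + β) * t ^ α * s ^ β - α * t ^ (α + β)) / (α * β * (α + β)))
    (hx : ∀ t s, x t s =
      (α * t ^ α * (t ^ β - s ^ β) + β * s ^ β * (s ^ α - t ^ α)) /
        (α * β * (α + β)))
    (hG : ∀ t s, G t s =
      if s ≤ τ then (if t ≤ s then u t s else s ^ (α + β) / (α * (α + β)))
      else (if t ≤ s then u t τ else u t τ + x t s)) :
    ∀ t ∈ Set.Ioc (0:ℝ) 1, ∀ s ∈ Set.Ioc (0:ℝ) 1,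
      0 < G t s ∧ G t s ≤ G τ s := by
  obtain rfl : u = rightFocalU α β := funext fun t ↦ funext (hu t)
  obtain rfl : x = rightFocalX α β := funext fun t ↦ funext (hx t)
  have hτ' : α < (α + β) * τ ^ β := by rwa [← div_lt_iff₀' (by positivity)]
  rintro t ⟨ht0, ht1⟩ s ⟨hs0, -⟩
  rw [hG, hG]
  rcases le_or_gt s τ with hsτ | hτs
  · rw [if_pos hsτ, if_pos hsτ, ← rightFocalU_self hα hβ hs0]
    have hGτ : (if τ ≤ s then rightFocalU α β τ s else rightFocalU α β s s)
        = rightFocalU α β s s := by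
      split_ifs with h
      · rw [le_antisymm hsτ h]
      · rfl
    rw [hGτ]
    split_ifs with hts
    · refine ⟨rightFocalU_pos hα hβ ht0 ?_, rightFocalU_le_self hα hβ ht0.le hs0⟩
      have : t ^ β ≤ s ^ β := rpow_le_rpow ht0.le hts hβ.le
      nlinarith [rpow_pos_of_pos hs0 β]
    · exact ⟨by rw [rightFocalU_self hα hβ hs0]; positivity, le_rfl⟩
  · rw [if_neg hτs.not_ge, if_neg hτs.not_ge, if_pos hτs.le]
    split_ifs with hts
    · refine ⟨rightFocalU_pos hα hβ ht0 ?_, rightFocalU_le_self hα hβ ht0.le hτ0⟩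
      have : t ^ β ≤ 1 := rpow_le_one ht0.le ht1 hβ.le
      nlinarith
    · have hτ1 : 0 < rightFocalU α β 1 τ := rightFocalU_pos hα hβ one_pos (by simpa)
      exact rightFocalU_add_rightFocalX_bounds hα hβ hτ1 hτ0 hτs.le (not_le.1 hts).le ht1

theorem right_focal_green_bounds (α β τ : ℝ) (hα : 0 < α) (hα1 : α ≤ 1)
    (hβ : 0 < β) (hβ1 : β ≤ 1) (hτ0 : 0 < τ) (hτ1 : τ < 1)
    (hτ : α / (α + β) < τ ^ β)
    (u x G : ℝ → ℝ → ℝ)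
    (hu : ∀ t s, u t s =
      ((α + β) * t ^ α * s ^ β - α * t ^ (α + β)) / (α * β * (α + β)))
    (hx : ∀ t s, x t s =
      (α * t ^ α * (t ^ β - s ^ β) + β * s ^ β * (s ^ α - t ^ α)) /
        (α * β * (α + β)))
    (hG : ∀ t s, G t s =
      if s ≤ τ then (if t ≤ s then u t s else s ^ (α + β) / (α * (α + β)))
      else (if t ≤ s then u t τ else u t τ + x t s)) :
    ∀ t ∈ Set.Ioc (0:ℝ) 1, ∀ s ∈ Set.Ioc (0:ℝ) 1,
      0 < G t s ∧ G t s ≤ G τ s :=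
  right_focal_green_bounds_general α β τ hα hβ hτ0 hτ u x G hu hx hG
end

section
/- Let 0 < α, β ≤ 1, 0 < τ < 1 with τ^β > α/(α+β), and let G(t,s) be the right-focal Green's function as defined from u(t,s) = [(α+β)t^α s^β − α t^{α+β}]/(αβ(α+β)) and x(t,s) = [α t^α(t^β − s^β) + β s^β(s^α − t^α)]/(αβ(α+β)). Define g(t) := min{ (t^α/(β τ^{α+β}))[(α+β)τ^β − α t^β], (1−t)/(1−τ) }. Then g(t)·G(τ,s) ≤ G(t,s) ≤ G(τ,s) for all t, s ∈ [0,1]. -/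
/-!
With `c = αβ(α+β)` one has `c · u(t,s) = t^α ((α+β) s^β - α t^β)`, and every estimate reduces to the
weighted AM–GM inequality `(α+β) a^α b^β ≤ α a^{α+β} + β b^{α+β}`. It gives `u(t,s) ≤ u(s,s)`,
`x(t,s) ≥ 0`, and, since `u(s,s) = s^{α+β}/(α(α+β))`, that `G(·,s)` peaks at `t = τ` with
`G(τ,s) = u(m,m)`, `m = min s τ`. The first branch of `g` is `u(t,τ)/u(τ,τ)`, so for `s > τ` the
lower bound says `G(t,s) ≥ u(t,τ)`; for `t ≤ s ≤ τ` it is the cross inequality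
`u(t,τ) u(s,s) ≤ u(t,s) u(τ,τ)`, whose defect is decreasing in `t^β` and at `t = s` is again AM–GM.
-/

open Real

namespace RightFocal

noncomputable def u (α β t s : ℝ) : ℝ :=
  ((α + β) * t ^ α * s ^ β - α * t ^ (α + β)) / (α * β * (α + β))

noncomputable def x (α β t s : ℝ) : ℝ :=
  (α * t ^ α * (t ^ β - s ^ β) + β * s ^ β * (s ^ α - t ^ α)) / (α * β * (α + β))

noncomputable def green (α β τ t s : ℝ) : ℝ :=
  if s ≤ τ then (if t ≤ s then u α β t s else s ^ (α + β) / (α * (α + β)))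
  else (if t ≤ s then u α β t τ else u α β t τ + x α β t s)

variable {α β τ t s a b : ℝ}

theorem add_mul_rpow_mul_rpow_le (hα : 0 < α) (hβ : 0 < β) (ha : 0 ≤ a) (hb : 0 ≤ b) :
    (α + β) * (a ^ α * b ^ β) ≤ α * (a ^ α * a ^ β) + β * (b ^ α * b ^ β) := by
  have hαβ : 0 < α + β := by linarith
  have pow_eq {c γ : ℝ} (hc : 0 ≤ c) : (c ^ (α + β)) ^ (γ / (α + β)) = c ^ γ := by
    rw [← rpow_mul hc, mul_div_cancel₀ _ hαβ.ne']
  have amgm := geom_mean_le_arith_mean2_weighted (div_nonneg hα.le hαβ.le)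
    (div_nonneg hβ.le hαβ.le) (rpow_nonneg ha (α + β)) (rpow_nonneg hb (α + β))
    (by rw [← add_div, div_self hαβ.ne'])
  rw [pow_eq ha, pow_eq hb, div_mul_eq_mul_div, div_mul_eq_mul_div, ← add_div,
    le_div_iff₀ hαβ] at amgm
  rw [← rpow_add' ha hαβ.ne', ← rpow_add' hb hαβ.ne']
  linarith

theorem u_eq (hαβ : α + β ≠ 0) (ht : 0 ≤ t) :
    u α β t s = t ^ α * ((α + β) * s ^ β - α * t ^ β) / (α * β * (α + β)) := by
  rw [u, rpow_add' ht hαβ]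
  ring_nf

theorem u_self (hα : 0 < α) (hβ : 0 < β) (hs : 0 ≤ s) :
    u α β s s = s ^ (α + β) / (α * (α + β)) := by
  have hαβ : α + β ≠ 0 := by positivity
  rw [u_eq hαβ hs, rpow_add' hs hαβ]
  field_simp
  ring

theorem u_le_u_self (hα : 0 < α) (hβ : 0 < β) (ht : 0 ≤ t) (hs : 0 ≤ s) :
    u α β t s ≤ u α β s s := by
  have hαβ : α + β ≠ 0 := by positivity
  rw [u_eq hαβ ht, u_eq hαβ hs]
  gcongr ?_ / _
  linarith [add_mul_rpow_mul_rpow_le hα hβ ht hs]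

theorem u_self_nonneg (hα : 0 < α) (hβ : 0 < β) (hs : 0 ≤ s) : 0 ≤ u α β s s := by
  rw [u_self hα hβ hs]
  positivity

theorem u_self_pos (hα : 0 < α) (hβ : 0 < β) (hτ : 0 < τ) : 0 < u α β τ τ := by
  rw [u_self hα hβ hτ.le]
  positivity

theorem u_div_u_self (hα : 0 < α) (hβ : 0 < β) (hτ : 0 < τ) (ht : 0 ≤ t) :
    t ^ α / (β * τ ^ (α + β)) * ((α + β) * τ ^ β - α * t ^ β) = u α β t τ / u α β τ τ := by
  have hαβ : α + β ≠ 0 := by positivity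
  rw [u_self hα hβ hτ.le, u_eq hαβ ht]
  field_simp

theorem x_nonneg (hα : 0 < α) (hβ : 0 < β) (ht : 0 ≤ t) (hs : 0 ≤ s) : 0 ≤ x α β t s := by
  unfold x
  apply div_nonneg _ (by positivity)
  linarith [add_mul_rpow_mul_rpow_le hα hβ ht hs]

theorem u_add_x_le (hα : 0 < α) (hβ : 0 < β) (hτ : 0 ≤ τ) (hτs : τ ≤ s) (hst : s ≤ t) :
    u α β t τ + x α β t s ≤ u α β s τ := by
  have hαβ : α + β ≠ 0 := by positivity
  have hs : 0 ≤ s := hτ.trans hτs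
  rw [u_eq hαβ (hs.trans hst), u_eq hαβ hs, x, ← add_div]
  gcongr ?_ / _
  have hst' : s ^ α ≤ t ^ α := rpow_le_rpow hs hst hα.le
  have hτs' : τ ^ β ≤ s ^ β := rpow_le_rpow hτ hτs hβ.le
  nlinarith [mul_nonneg (add_pos hα hβ).le
    (mul_nonneg (sub_nonneg.2 hst') (sub_nonneg.2 hτs'))]

theorem u_mul_u_self_le (hα : 0 < α) (hβ : 0 < β) (ht : 0 ≤ t) (hts : t ≤ s) (hsτ : s ≤ τ) :
    u α β t τ * u α β s s ≤ u α β t s * u α β τ τ := by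
  have hαβ : α + β ≠ 0 := by positivity
  have hs : 0 ≤ s := ht.trans hts
  have hτ : 0 ≤ τ := hs.trans hsτ
  rw [u_eq hαβ ht, u_eq hαβ hs, u_eq hαβ ht, u_eq hαβ hτ, div_mul_div_comm, div_mul_div_comm]
  gcongr ?_ / _
  have hts' : t ^ β ≤ s ^ β := rpow_le_rpow ht hts hβ.le
  have hsτ' : s ^ α * s ^ β ≤ τ ^ α * τ ^ β := by gcongr
  have hs' : 0 ≤ s ^ β := by positivity
  -- the defect is decreasing in `t ^ β`; at `t = s` it is `s ^ β` times AM–GM for `(s, τ)`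
  have defect_nonneg : 0 ≤ ((α + β) * s ^ β - α * t ^ β) * (τ ^ α * τ ^ β)
      - ((α + β) * τ ^ β - α * t ^ β) * (s ^ α * s ^ β) := by
    nlinarith [mul_le_mul_of_nonneg_right hts' (sub_nonneg.2 hsτ'),
      mul_le_mul_of_nonneg_left (add_mul_rpow_mul_rpow_le hα hβ hs hτ) hs']
  nlinarith [mul_nonneg (mul_nonneg (rpow_nonneg ht α) hβ.le) defect_nonneg]

theorem green_self_of_le (hα : 0 < α) (hβ : 0 < β) (hs : 0 ≤ s) (hsτ : s ≤ τ) :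
    green α β τ τ s = u α β s s := by
  rw [green, if_pos hsτ]
  split_ifs with hτs
  · rw [le_antisymm hsτ hτs]
  · rw [u_self hα hβ hs]

theorem green_self_of_lt (hτs : τ < s) : green α β τ τ s = u α β τ τ := by
  rw [green, if_neg hτs.not_ge, if_pos hτs.le]

theorem green_self_nonneg (hα : 0 < α) (hβ : 0 < β) (hτ : 0 ≤ τ) (hs : 0 ≤ s) :
    0 ≤ green α β τ τ s := by
  rcases le_or_gt s τ with hsτ | hτs
  · exact green_self_of_le hα hβ hs hsτ ▸ u_self_nonneg hα hβ hs
  · exact green_self_of_lt hτs ▸ u_self_nonneg hα hβ hτ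

theorem green_le_green_self (hα : 0 < α) (hβ : 0 < β) (hτ : 0 ≤ τ) (ht : 0 ≤ t) (hs : 0 ≤ s) :
    green α β τ t s ≤ green α β τ τ s := by
  rcases le_or_gt s τ with hsτ | hτs
  · rw [green_self_of_le hα hβ hs hsτ, green, if_pos hsτ]
    split_ifs
    · exact u_le_u_self hα hβ ht hs
    · rw [u_self hα hβ hs]
  · rw [green_self_of_lt hτs, green, if_neg hτs.not_ge]
    split_ifs with hts
    · exact u_le_u_self hα hβ ht hτ
    · exact (u_add_x_le hα hβ hτ hτs.le (not_le.1 hts).le).trans (u_le_u_self hα hβ hs hτ)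

theorem u_div_u_self_mul_green_self_le (hα : 0 < α) (hβ : 0 < β) (hτ : 0 < τ) (ht : 0 ≤ t)
    (hs : 0 ≤ s) : u α β t τ / u α β τ τ * green α β τ τ s ≤ green α β τ t s := by
  have hU := u_self_pos hα hβ hτ
  rcases le_or_gt s τ with hsτ | hτs
  · rw [green_self_of_le hα hβ hs hsτ, green, if_pos hsτ]
    split_ifs with hts
    · rw [div_mul_eq_mul_div, div_le_iff₀ hU]
      exact u_mul_u_self_le hα hβ ht hts hsτ
    · rw [← u_self hα hβ hs]
      exact mul_le_of_le_one_left (u_self_nonneg hα hβ hs)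
        ((div_le_one hU).2 (u_le_u_self hα hβ ht hτ.le))
  · rw [green_self_of_lt hτs, div_mul_cancel₀ _ hU.ne', green, if_neg hτs.not_ge]
    split_ifs
    · exact le_rfl
    · exact le_add_of_nonneg_right (x_nonneg hα hβ ht hs)

end RightFocal

theorem right_focal_green_lower_general (α β τ : ℝ) (hα : 0 < α)
    (hβ : 0 < β) (hτ0 : 0 < τ)
    (u x G : ℝ → ℝ → ℝ)
    (hu : ∀ t s, u t s =
      ((α + β) * t ^ α * s ^ β - α * t ^ (α + β)) / (α * β * (α + β)))
    (hx : ∀ t s, x t s =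
      (α * t ^ α * (t ^ β - s ^ β) + β * s ^ β * (s ^ α - t ^ α)) /
        (α * β * (α + β)))
    (hG : ∀ t s, G t s =
      if s ≤ τ then (if t ≤ s then u t s else s ^ (α + β) / (α * (α + β)))
      else (if t ≤ s then u t τ else u t τ + x t s))
    (g : ℝ → ℝ)
    (hg : ∀ t, g t = min
      ((t ^ α / (β * τ ^ (α + β))) * ((α + β) * τ ^ β - α * t ^ β))
      ((1 - t) / (1 - τ))) :
    ∀ t ∈ Set.Icc (0:ℝ) 1, ∀ s ∈ Set.Icc (0:ℝ) 1,
      g t * G τ s ≤ G t s ∧ G t s ≤ G τ s := by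
  obtain rfl : u = RightFocal.u α β := funext fun t => funext (hu t)
  obtain rfl : x = RightFocal.x α β := funext fun t => funext (hx t)
  obtain rfl : G = RightFocal.green α β τ := funext fun t => funext (hG t)
  rintro t ⟨ht, -⟩ s ⟨hs, -⟩
  have hg_le : g t ≤ RightFocal.u α β t τ / RightFocal.u α β τ τ := by
    rw [hg, ← RightFocal.u_div_u_self hα hβ hτ0 ht]
    exact min_le_left _ _
  exact ⟨(mul_le_mul_of_nonneg_right hg_le (RightFocal.green_self_nonneg hα hβ hτ0.le hs)).trans
      (RightFocal.u_div_u_self_mul_green_self_le hα hβ hτ0 ht hs),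
    RightFocal.green_le_green_self hα hβ hτ0.le ht hs⟩

theorem right_focal_green_lower (α β τ : ℝ) (hα : 0 < α) (hα1 : α ≤ 1)
    (hβ : 0 < β) (hβ1 : β ≤ 1) (hτ0 : 0 < τ) (hτ1 : τ < 1)
    (hτ : α / (α + β) < τ ^ β)
    (u x G : ℝ → ℝ → ℝ)
    (hu : ∀ t s, u t s =
      ((α + β) * t ^ α * s ^ β - α * t ^ (α + β)) / (α * β * (α + β)))
    (hx : ∀ t s, x t s =
      (α * t ^ α * (t ^ β - s ^ β) + β * s ^ β * (s ^ α - t ^ α)) /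
        (α * β * (α + β)))
    (hG : ∀ t s, G t s =
      if s ≤ τ then (if t ≤ s then u t s else s ^ (α + β) / (α * (α + β)))
      else (if t ≤ s then u t τ else u t τ + x t s))
    (g : ℝ → ℝ)
    (hg : ∀ t, g t = min
      ((t ^ α / (β * τ ^ (α + β))) * ((α + β) * τ ^ β - α * t ^ β))
      ((1 - t) / (1 - τ))) :
    ∀ t ∈ Set.Icc (0:ℝ) 1, ∀ s ∈ Set.Icc (0:ℝ) 1,
      g t * G τ s ≤ G t s ∧ G t s ≤ G τ s :=
  right_focal_green_lower_general α β τ hα hβ hτ0 u x G hu hx hG g hg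
end

section
/- Let 0 < α, β, γ ≤ 1 and define G(t,s) on [0,1]² by G(t,s) = (t^{α+β}/γ)[ s^γ/(β(α+β)) − t^γ/((β+γ)(α+β+γ)) ] for t ≤ s and G(t,s) = (s^{β+γ}/α)[ t^α/(β(β+γ)) − s^α/((α+β)(α+β+γ)) ] for s ≤ t. Then for each fixed s ∈ [0,1], the function t ↦ G(t,s) is monotone nondecreasing on [0,1], and hence 0 ≤ G(t,s) ≤ G(1,s) for all t, s ∈ [0,1]. -/
open Real Set

/-! For fixed `s`, the branch `t ≤ s` is `A t^(α+β) - B t^(α+β+γ)` with derivative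
`t^(α+β-1) (s^γ/(γβ) - t^γ/(γ(β+γ)))`, which is nonnegative because `t ≤ s` and `β < β + γ`;
the branch `s ≤ t` is an increasing affine function of `t^α`. The two branches agree at `t = s`,
so `t ↦ G t s` is monotone on `[0, 1]`, and the bounds follow from `G 0 s = 0`. -/

theorem monotoneOn_mul_rpow_sub_mul_rpow_add {A B p d s : ℝ} (hp : 0 ≤ p) (hd : 0 ≤ d)
    (hB : 0 ≤ B) (hAB : B * (p + d) * s ^ d ≤ A * p) :
    MonotoneOn (fun t : ℝ => A * t ^ p - B * t ^ (p + d)) (Icc 0 s) := by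
  have hpd : 0 ≤ p + d := by linarith
  have hderiv : ∀ x ∈ Ioo 0 s, HasDerivAt (fun t : ℝ => A * t ^ p - B * t ^ (p + d))
      (x ^ (p - 1) * (A * p - B * (p + d) * x ^ d)) x := by
    intro x hx
    have hsplit : x ^ (p + d - 1) = x ^ (p - 1) * x ^ d := by
      rw [← rpow_add hx.1]; ring_nf
    refine (((hasDerivAt_rpow_const (p := p) (Or.inl hx.1.ne')).const_mul A).sub
      ((hasDerivAt_rpow_const (p := p + d) (Or.inl hx.1.ne')).const_mul B)).congr_deriv ?_
    rw [hsplit]; ring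
  refine monotoneOn_of_deriv_nonneg (convex_Icc 0 s) ?_ ?_ ?_
  · exact ((continuous_rpow_const hp).const_smul A |>.sub
      ((continuous_rpow_const hpd).const_smul B)).continuousOn
  · rw [interior_Icc]
    exact fun x hx => (hderiv x hx).differentiableAt.differentiableWithinAt
  · rw [interior_Icc]
    intro x hx
    rw [(hderiv x hx).deriv]
    have hxs : x ^ d ≤ s ^ d := rpow_le_rpow hx.1.le hx.2.le hd
    have hB' : 0 ≤ B * (p + d) := mul_nonneg hB hpd
    exact mul_nonneg (rpow_nonneg hx.1.le _) (by nlinarith)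

section CantileverGreen

variable (α β γ s : ℝ)

noncomputable def cantileverGreenLeft (t : ℝ) : ℝ :=
  (t ^ (α + β) / γ) * (s ^ γ / (β * (α + β)) - t ^ γ / ((β + γ) * (α + β + γ)))

noncomputable def cantileverGreenRight (t : ℝ) : ℝ :=
  (s ^ (β + γ) / α) * (t ^ α / (β * (β + γ)) - s ^ α / ((α + β) * (α + β + γ)))

variable {α β γ s}

theorem monotoneOn_cantileverGreenLeft (hα : 0 < α) (hβ : 0 < β) (hγ : 0 < γ) (hs : 0 ≤ s) :
    MonotoneOn (cantileverGreenLeft α β γ s) (Icc 0 s) := by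
  have hmono := monotoneOn_mul_rpow_sub_mul_rpow_add (A := s ^ γ / (γ * β * (α + β)))
    (B := 1 / (γ * (β + γ) * (α + β + γ))) (s := s) (by positivity : 0 ≤ α + β) hγ.le
    (by positivity) <| by
      have hsγ : 0 ≤ s ^ γ := rpow_nonneg hs γ
      rw [show s ^ γ / (γ * β * (α + β)) * (α + β) = s ^ γ / (γ * β) by field_simp,
        show 1 / (γ * (β + γ) * (α + β + γ)) * (α + β + γ) * s ^ γ = s ^ γ / (γ * (β + γ)) by
          field_simp]
      exact div_le_div_of_nonneg_left hsγ (by positivity) (by nlinarith)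
  refine hmono.congr fun t ht => ?_
  simp only [cantileverGreenLeft, rpow_add' ht.1 (by positivity : α + β + γ ≠ 0)]
  field_simp

theorem monotoneOn_cantileverGreenRight (hα : 0 ≤ α) (hβ : 0 ≤ β) (hγ : 0 ≤ γ) (hs : 0 ≤ s) :
    MonotoneOn (cantileverGreenRight α β γ s) (Ici 0) := by
  intro a ha b _ hab
  unfold cantileverGreenRight
  gcongr

theorem cantileverGreenLeft_self (hα : 0 < α) (hβ : 0 < β) (hγ : 0 < γ) (hs : 0 ≤ s) :
    cantileverGreenLeft α β γ s s = cantileverGreenRight α β γ s s := by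
  have hsum : s ^ (α + β + γ) = s ^ (α + β) * s ^ γ := rpow_add' hs (by positivity)
  have hsum' : s ^ (α + β + γ) = s ^ (β + γ) * s ^ α := by
    rw [← rpow_add' hs (by positivity)]; ring_nf
  simp only [cantileverGreenLeft, cantileverGreenRight]
  have hL : s ^ (α + β) / γ * (s ^ γ / (β * (α + β)) - s ^ γ / ((β + γ) * (α + β + γ))) =
      s ^ (α + β + γ) * (α + 2 * β + γ) / (β * (α + β) * (β + γ) * (α + β + γ)) := by
    rw [hsum]; field_simp; ring
  have hR : s ^ (β + γ) / α * (s ^ α / (β * (β + γ)) - s ^ α / ((α + β) * (α + β + γ))) =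
      s ^ (α + β + γ) * (α + 2 * β + γ) / (β * (α + β) * (β + γ) * (α + β + γ)) := by
    rw [hsum']; field_simp; ring
  rw [hL, hR]

end CantileverGreen

theorem cantilever_green_monotone_general (α β γ : ℝ) (hα : 0 < α)
    (hβ : 0 < β) (hγ : 0 < γ)
    (G : ℝ → ℝ → ℝ)
    (hG : ∀ t s, G t s =
      if t ≤ s then
        (t ^ (α + β) / γ) *
          (s ^ γ / (β * (α + β)) - t ^ γ / ((β + γ) * (α + β + γ)))
      else
        (s ^ (β + γ) / α) *
          (t ^ α / (β * (β + γ)) - s ^ α / ((α + β) * (α + β + γ)))) :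
    (∀ s ∈ Set.Icc (0:ℝ) 1, MonotoneOn (fun t => G t s) (Set.Icc 0 1)) ∧
    (∀ t ∈ Set.Icc (0:ℝ) 1, ∀ s ∈ Set.Icc (0:ℝ) 1,
      0 ≤ G t s ∧ G t s ≤ G 1 s) := by
  have hmono : ∀ s ∈ Icc (0:ℝ) 1, MonotoneOn (fun t => G t s) (Icc 0 1) := by
    intro s ⟨hs0, hs1⟩
    have hleft : MonotoneOn (fun t => G t s) (Icc 0 s) :=
      (monotoneOn_cantileverGreenLeft hα hβ hγ hs0).congr fun t ht => by
        simp only [hG, if_pos ht.2, cantileverGreenLeft]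
    have hright : MonotoneOn (fun t => G t s) (Icc s 1) :=
      ((monotoneOn_cantileverGreenRight hα.le hβ.le hγ.le hs0).mono
        fun t ht => hs0.trans ht.1).congr fun t ht => by
          rcases ht.1.eq_or_lt with rfl | hst
          · simp only [hG, le_refl, if_true, ← cantileverGreenLeft_self hα hβ hγ hs0,
              cantileverGreenLeft]
          · simp only [hG, if_neg hst.not_ge, cantileverGreenRight]
    rw [← Icc_union_Icc_eq_Icc hs0 hs1]
    exact hleft.union_right hright (isGreatest_Icc hs0) (isLeast_Icc hs1)
  refine ⟨hmono, fun t ht s hs => ⟨?_, hmono s hs ht ⟨zero_le_one, le_rfl⟩ ht.2⟩⟩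
  have hG0 : G 0 s = 0 := by
    rw [hG, if_pos hs.1, zero_rpow (by positivity : α + β ≠ 0)]
    ring
  simpa [hG0] using hmono s hs ⟨le_rfl, zero_le_one⟩ ht ht.1

theorem cantilever_green_monotone (α β γ : ℝ) (hα : 0 < α) (hα1 : α ≤ 1)
    (hβ : 0 < β) (hβ1 : β ≤ 1) (hγ : 0 < γ) (hγ1 : γ ≤ 1)
    (G : ℝ → ℝ → ℝ)
    (hG : ∀ t s, G t s =
      if t ≤ s then
        (t ^ (α + β) / γ) *
          (s ^ γ / (β * (α + β)) - t ^ γ / ((β + γ) * (α + β + γ)))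
      else
        (s ^ (β + γ) / α) *
          (t ^ α / (β * (β + γ)) - s ^ α / ((α + β) * (α + β + γ)))) :
    (∀ s ∈ Set.Icc (0:ℝ) 1, MonotoneOn (fun t => G t s) (Set.Icc 0 1)) ∧
    (∀ t ∈ Set.Icc (0:ℝ) 1, ∀ s ∈ Set.Icc (0:ℝ) 1,
      0 ≤ G t s ∧ G t s ≤ G 1 s) :=
  cantilever_green_monotone_general α β γ hα hβ hγ G hG
end

section
/- Let 0 < α, β ≤ 1 and define u(t,s) = (t^α / (αβ(α+β)(2α+β)))·[2α s^α(1 − s^β) − β(1 − s^α)(t^{α+β} + s^{α+β})]. Then for 0 ≤ t ≤ s ≤ 1, u(t,s) ≥ (2 s^α t^α / (αβ(α+β)(2α+β)))·[α(1 − s^β) − β(1 − s^α)s^β], and the bracketed quantity is positive for s ∈ [0,1); hence u(t,s) ≥ 0 for 0 ≤ t ≤ s ≤ 1. -/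
open Real

/-!
Bernoulli's inequality `y ^ p < 1 + p (y - 1)` with `y = s ^ (α + β)` and `p = β / (α + β)` gives
`(α + β) s^β < α + β s^(α+β)` for `s ≠ 1`, which is the positivity of the bracket.
The lower bound differs from `u t s` by `t^α β (1 - s^α) (s^(α+β) - t^(α+β)) / (αβ(α+β)(2α+β))`,
which is nonnegative for `0 ≤ t ≤ s ≤ 1`; multiplying the bracket by a nonnegative factor
then gives `u ≥ 0`.
-/

theorem add_mul_rpow_lt_add_mul_rpow_add {α β s : ℝ} (hα : 0 < α) (hβ : 0 < β) (hs : 0 ≤ s)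
    (hs1 : s ≠ 1) : (α + β) * s ^ β < α + β * s ^ (α + β) := by
  have hab : 0 < α + β := by linarith
  set y := s ^ (α + β)
  have hy1 : y ≠ 1 := fun h => hs1 <| by
    rw [← rpow_rpow_inv hs hab.ne', show s ^ (α + β) = 1 from h, one_rpow]
  have hsy : s ^ β = y ^ (β / (α + β)) := by
    rw [← rpow_mul hs, mul_div_cancel₀ _ hab.ne']
  have hbernoulli : y ^ (β / (α + β)) < 1 + β / (α + β) * (y - 1) := by
    simpa using rpow_one_add_lt_one_add_mul_self (s := y - 1)
      (by linarith [rpow_nonneg hs (α + β)]) (sub_ne_zero.mpr hy1)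
      (div_pos hβ hab) ((div_lt_one hab).mpr (by linarith))
  calc (α + β) * s ^ β < (α + β) * (1 + β / (α + β) * (y - 1)) := by
        rw [hsy]; exact mul_lt_mul_of_pos_left hbernoulli hab
    _ = α + β * y := by field_simp; ring

theorem lidstone_bracket_pos {α β s : ℝ} (hα : 0 < α) (hβ : 0 < β) (hs : 0 ≤ s) (hs1 : s ≠ 1) :
    0 < α * (1 - s ^ β) - β * (1 - s ^ α) * s ^ β := by
  have h := add_mul_rpow_lt_add_mul_rpow_add hα hβ hs hs1
  rw [rpow_add' hs (by linarith)] at h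
  linarith

theorem lidstone_bracket_nonneg {α β s : ℝ} (hα : 0 < α) (hβ : 0 < β) (hs : 0 ≤ s) :
    0 ≤ α * (1 - s ^ β) - β * (1 - s ^ α) * s ^ β := by
  rcases eq_or_ne s 1 with rfl | hs1
  · simp
  · exact (lidstone_bracket_pos hα hβ hs hs1).le

theorem lidstone_lower_le {α β t s : ℝ} (hα : 0 < α) (hβ : 0 < β) (ht : 0 ≤ t) (hts : t ≤ s)
    (hs1 : s ≤ 1) :
    (2 * s ^ α * t ^ α / (α * β * (α + β) * (2 * α + β))) *
        (α * (1 - s ^ β) - β * (1 - s ^ α) * s ^ β) ≤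
      (t ^ α / (α * β * (α + β) * (2 * α + β))) *
        (2 * α * s ^ α * (1 - s ^ β) - β * (1 - s ^ α) * (t ^ (α + β) + s ^ (α + β))) := by
  have hs : 0 ≤ s := ht.trans hts
  have hab : 0 < α + β := by linarith
  have hsα : 0 ≤ 1 - s ^ α := sub_nonneg.mpr (rpow_le_one hs hs1 hα.le)
  have hts' : 0 ≤ s ^ (α + β) - t ^ (α + β) := sub_nonneg.mpr (rpow_le_rpow ht hts hab.le)
  rw [← sub_nonneg]
  convert (show 0 ≤ t ^ α / (α * β * (α + β) * (2 * α + β)) *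
      (β * (1 - s ^ α) * (s ^ (α + β) - t ^ (α + β))) by positivity) using 1
  rw [rpow_add' hs hab.ne']
  ring

theorem lidstone_u_lower_general (α β : ℝ) (hα : 0 < α)
    (hβ : 0 < β)
    (u : ℝ → ℝ → ℝ)
    (hu : ∀ t s, u t s =
      (t ^ α / (α * β * (α + β) * (2 * α + β))) *
        (2 * α * s ^ α * (1 - s ^ β) -
          β * (1 - s ^ α) * (t ^ (α + β) + s ^ (α + β)))) :
    (∀ t s : ℝ, 0 ≤ t → t ≤ s → s ≤ 1 →
      (2 * s ^ α * t ^ α / (α * β * (α + β) * (2 * α + β))) *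
        (α * (1 - s ^ β) - β * (1 - s ^ α) * s ^ β) ≤ u t s) ∧
    (∀ s : ℝ, 0 ≤ s → s < 1 →
      0 < α * (1 - s ^ β) - β * (1 - s ^ α) * s ^ β) ∧
    (∀ t s : ℝ, 0 ≤ t → t ≤ s → s ≤ 1 → 0 ≤ u t s) := by
  have hlower : ∀ t s : ℝ, 0 ≤ t → t ≤ s → s ≤ 1 →
      (2 * s ^ α * t ^ α / (α * β * (α + β) * (2 * α + β))) *
        (α * (1 - s ^ β) - β * (1 - s ^ α) * s ^ β) ≤ u t s := fun t s ht hts hs1 => by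
    rw [hu]; exact lidstone_lower_le hα hβ ht hts hs1
  refine ⟨hlower, fun s hs hs1 => lidstone_bracket_pos hα hβ hs hs1.ne, ?_⟩
  intro t s ht hts hs1
  have hs : 0 ≤ s := ht.trans hts
  exact (mul_nonneg (by positivity) (lidstone_bracket_nonneg hα hβ hs)).trans
    (hlower t s ht hts hs1)

theorem lidstone_u_lower (α β : ℝ) (hα : 0 < α) (hα1 : α ≤ 1)
    (hβ : 0 < β) (hβ1 : β ≤ 1)
    (u : ℝ → ℝ → ℝ)
    (hu : ∀ t s, u t s =
      (t ^ α / (α * β * (α + β) * (2 * α + β))) *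
        (2 * α * s ^ α * (1 - s ^ β) -
          β * (1 - s ^ α) * (t ^ (α + β) + s ^ (α + β)))) :
    (∀ t s : ℝ, 0 ≤ t → t ≤ s → s ≤ 1 →
      (2 * s ^ α * t ^ α / (α * β * (α + β) * (2 * α + β))) *
        (α * (1 - s ^ β) - β * (1 - s ^ α) * s ^ β) ≤ u t s) ∧
    (∀ s : ℝ, 0 ≤ s → s < 1 →
      0 < α * (1 - s ^ β) - β * (1 - s ^ α) * s ^ β) ∧
    (∀ t s : ℝ, 0 ≤ t → t ≤ s → s ≤ 1 → 0 ≤ u t s) :=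
  lidstone_u_lower_general α β hα hβ u hu
end

section
/- Let 0 < α ≤ 1, let h : [0,1] → ℝ be continuous, and define G(t,s) = (1/α)t^α(1 − s^α) for t ≤ s and (1/α)s^α(1 − t^α) for s ≤ t. Let β ∈ (0,1] and x(t) := ∫₀¹ G(t,s) h(s) s^{β−1} ds. Then x(0) = x(1) = 0 and for t ∈ (0,1), t^{1−β} · d/dt ( t^{1−α} x'(t) ) = −h(t). -/
/-!
Write `g s = h s * s ^ (β - 1)`. Splitting the Green integral at `t` gives
`x t = α⁻¹ (1 - t^α) A t + α⁻¹ t^α B t` with `A t = ∫₀ᵗ s^α g` and `B t = ∫ₜ¹ (1 - s^α) g`.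
By the fundamental theorem of calculus the terms containing `g t` cancel in `x'`, leaving
`t^(1-α) x' t = B t - A t`, whose derivative is `-(1 - t^α) g t - t^α g t = -g t`.
Multiplying by `t^(1-β)` removes the weight `t^(β-1)`. At `t = 0` and `t = 1` the kernel vanishes.
-/

open Real MeasureTheory intervalIntegral Set

noncomputable def conformableGreen (α t s : ℝ) : ℝ :=
  if t ≤ s then (1 / α) * t ^ α * (1 - s ^ α) else (1 / α) * s ^ α * (1 - t ^ α)

lemma rpow_one_sub_mul_rpow_sub_one {t : ℝ} (ht : 0 < t) (a : ℝ) :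
    t ^ (1 - a) * t ^ (a - 1) = 1 := by
  rw [← rpow_add ht]; simp

lemma IntervalIntegrable.continuous_mul_of_mem_uIcc {f g : ℝ → ℝ} {a b u v : ℝ}
    (hf : Continuous f) (hg : IntervalIntegrable g volume a b)
    (hu : u ∈ uIcc a b) (hv : v ∈ uIcc a b) :
    IntervalIntegrable (fun s => f s * g s) volume u v :=
  (hg.mono_set (uIcc_subset_uIcc hu hv)).continuousOn_mul hf.continuousOn

section

variable {α : ℝ} {g : ℝ → ℝ}

lemma hasDerivAt_integral_rpow_mul (hα : 0 ≤ α) (hg : IntervalIntegrable g volume 0 1)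
    (hgc : ContinuousOn g (Ioo 0 1)) {t : ℝ} (ht : t ∈ Ioo (0:ℝ) 1) :
    HasDerivAt (fun u => ∫ s in (0:ℝ)..u, s ^ α * g s) (t ^ α * g t) t := by
  have hpow : Continuous fun s : ℝ => s ^ α := continuous_rpow_const hα
  exact integral_hasDerivAt_right
    (hg.continuous_mul_of_mem_uIcc hpow (by simp) (Icc_subset_uIcc (Ioo_subset_Icc_self ht)))
    ((hpow.continuousOn.mul hgc).stronglyMeasurableAtFilter isOpen_Ioo t ht)
    (hpow.continuousAt.mul (hgc.continuousAt (Ioo_mem_nhds ht.1 ht.2)))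

lemma hasDerivAt_integral_one_sub_rpow_mul (hα : 0 ≤ α) (hg : IntervalIntegrable g volume 0 1)
    (hgc : ContinuousOn g (Ioo 0 1)) {t : ℝ} (ht : t ∈ Ioo (0:ℝ) 1) :
    HasDerivAt (fun u => ∫ s in u..1, (1 - s ^ α) * g s) (-((1 - t ^ α) * g t)) t := by
  have hpow : Continuous fun s : ℝ => 1 - s ^ α :=
    continuous_const.sub (continuous_rpow_const hα)
  exact integral_hasDerivAt_left
    (hg.continuous_mul_of_mem_uIcc hpow (Icc_subset_uIcc (Ioo_subset_Icc_self ht)) (by simp))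
    ((hpow.continuousOn.mul hgc).stronglyMeasurableAtFilter isOpen_Ioo t ht)
    (hpow.continuousAt.mul (hgc.continuousAt (Ioo_mem_nhds ht.1 ht.2)))

end

namespace conformableGreen

variable {α : ℝ}

lemma of_le {t s : ℝ} (h : t ≤ s) :
    conformableGreen α t s = (1 / α) * t ^ α * (1 - s ^ α) :=
  if_pos h

lemma of_ge {t s : ℝ} (h : s ≤ t) :
    conformableGreen α t s = (1 / α) * s ^ α * (1 - t ^ α) := by
  unfold conformableGreen
  split_ifs with hts
  · rw [le_antisymm hts h]
  · rfl

lemma zero_left (hα : α ≠ 0) {s : ℝ} (hs : 0 ≤ s) : conformableGreen α 0 s = 0 := by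
  simp [of_le hs, zero_rpow hα]

lemma one_left {s : ℝ} (hs : s ≤ 1) : conformableGreen α 1 s = 0 := by
  simp [of_ge hs]

variable {g : ℝ → ℝ}

lemma integral_zero_left_mul (hα : α ≠ 0) :
    ∫ s in (0:ℝ)..1, conformableGreen α 0 s * g s = 0 := by
  rw [integral_congr (g := fun _ => 0), intervalIntegral.integral_zero]
  intro s hs
  rw [uIcc_of_le zero_le_one] at hs
  simp [zero_left hα hs.1]

lemma integral_one_left_mul :
    ∫ s in (0:ℝ)..1, conformableGreen α 1 s * g s = 0 := by
  rw [integral_congr (g := fun _ => 0), intervalIntegral.integral_zero]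
  intro s hs
  rw [uIcc_of_le zero_le_one] at hs
  simp [one_left hs.2]

lemma integral_mul_eq_split (hα : 0 ≤ α) (hg : IntervalIntegrable g volume 0 1)
    {t : ℝ} (ht : t ∈ Icc (0:ℝ) 1) :
    ∫ s in (0:ℝ)..1, conformableGreen α t s * g s =
      (1 / α) * (1 - t ^ α) * (∫ s in (0:ℝ)..t, s ^ α * g s) +
        (1 / α) * t ^ α * ∫ s in t..1, (1 - s ^ α) * g s := by
  have hpow : Continuous fun s : ℝ => s ^ α := continuous_rpow_const hα
  have h0 : (0:ℝ) ∈ uIcc 0 1 := by simp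
  have h1 : (1:ℝ) ∈ uIcc 0 1 := by simp
  have ht' : t ∈ uIcc 0 1 := Icc_subset_uIcc ht
  have below : EqOn (fun s => (1 / α) * (1 - t ^ α) * (s ^ α * g s))
      (fun s => conformableGreen α t s * g s) (uIoc 0 t) := by
    intro s hs
    rw [uIoc_of_le ht.1] at hs
    simp only [of_ge hs.2]; ring
  have above : EqOn (fun s => (1 / α) * t ^ α * ((1 - s ^ α) * g s))
      (fun s => conformableGreen α t s * g s) (uIoc t 1) := by
    intro s hs
    rw [uIoc_of_le ht.2] at hs
    simp only [of_le hs.1.le]; ring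
  have int_below := ((hg.continuous_mul_of_mem_uIcc hpow h0 ht').const_mul _).congr below
  have int_above :=
    ((hg.continuous_mul_of_mem_uIcc (continuous_const.sub hpow) ht' h1).const_mul _).congr above
  rw [← integral_add_adjacent_intervals int_below int_above,
    integral_congr_ae (.of_forall fun s hs => (below hs).symm),
    integral_congr_ae (.of_forall fun s hs => (above hs).symm),
    intervalIntegral.integral_const_mul, intervalIntegral.integral_const_mul]

lemma hasDerivAt_integral_mul (hα : 0 < α) (hg : IntervalIntegrable g volume 0 1)
    (hgc : ContinuousOn g (Ioo 0 1)) {t : ℝ} (ht : t ∈ Ioo (0:ℝ) 1) :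
    HasDerivAt (fun u => ∫ s in (0:ℝ)..1, conformableGreen α u s * g s)
      (t ^ (α - 1) * ((∫ s in t..1, (1 - s ^ α) * g s) - ∫ s in (0:ℝ)..t, s ^ α * g s)) t := by
  have hpow : HasDerivAt (fun u : ℝ => u ^ α) (α * t ^ (α - 1)) t :=
    hasDerivAt_rpow_const (.inl ht.1.ne')
  have hsplit := (((hasDerivAt_const t 1).sub hpow).const_mul (1 / α)).mul
    (hasDerivAt_integral_rpow_mul hα.le hg hgc ht) |>.add
    ((hpow.const_mul (1 / α)).mul (hasDerivAt_integral_one_sub_rpow_mul hα.le hg hgc ht))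
  refine (hsplit.congr_deriv ?_).congr_of_eventuallyEq ?_
  · simp only [Pi.sub_apply]; field_simp; ring
  · filter_upwards [isOpen_Ioo.mem_nhds ht] with u hu
    exact integral_mul_eq_split hα.le hg (Ioo_subset_Icc_self hu)

lemma hasDerivAt_rpow_one_sub_mul_deriv (hα : 0 < α) (hg : IntervalIntegrable g volume 0 1)
    (hgc : ContinuousOn g (Ioo 0 1)) {t : ℝ} (ht : t ∈ Ioo (0:ℝ) 1) :
    HasDerivAt (fun u => u ^ (1 - α) *
      deriv (fun u => ∫ s in (0:ℝ)..1, conformableGreen α u s * g s) u) (-g t) t := by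
  have hflux := (hasDerivAt_integral_one_sub_rpow_mul hα.le hg hgc ht).sub
    (hasDerivAt_integral_rpow_mul hα.le hg hgc ht)
  refine (hflux.congr_deriv (by ring)).congr_of_eventuallyEq ?_
  filter_upwards [isOpen_Ioo.mem_nhds ht] with u hu
  rw [(hasDerivAt_integral_mul hα hg hgc hu).deriv, ← mul_assoc,
    rpow_one_sub_mul_rpow_sub_one hu.1, one_mul]
  rfl

end conformableGreen

theorem conjugate_bvp_solution_general (α β : ℝ) (hα : 0 < α)
    (hβ : 0 < β)
    (h : ℝ → ℝ) (hcont : ContinuousOn h (Set.Icc 0 1))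
    (G : ℝ → ℝ → ℝ)
    (hG : ∀ t s, G t s =
      if t ≤ s then (1 / α) * t ^ α * (1 - s ^ α)
      else (1 / α) * s ^ α * (1 - t ^ α))
    (x : ℝ → ℝ)
    (hx : ∀ t, x t = ∫ s in (0:ℝ)..1, G t s * h s * s ^ (β - 1)) :
    x 0 = 0 ∧ x 1 = 0 ∧
    ∀ t ∈ Set.Ioo (0:ℝ) 1,
      t ^ (1 - β) * deriv (fun τ => τ ^ (1 - α) * deriv x τ) t = -h t := by
  set g : ℝ → ℝ := fun s => h s * s ^ (β - 1)
  have hg : IntervalIntegrable g volume 0 1 :=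
    (intervalIntegrable_rpow' (by linarith)).continuousOn_mul (by simpa using hcont)
  have hgc : ContinuousOn g (Ioo 0 1) := fun t ht =>
    ((hcont.continuousAt (Icc_mem_nhds ht.1 ht.2)).mul
      (continuousAt_rpow_const t _ (.inl ht.1.ne'))).continuousWithinAt
  obtain rfl : x = fun t => ∫ s in (0:ℝ)..1, conformableGreen α t s * g s := by
    funext t
    simp only [hx, hG, conformableGreen, g, mul_assoc]
  refine ⟨conformableGreen.integral_zero_left_mul hα.ne', conformableGreen.integral_one_left_mul,
    fun t ht => ?_⟩
  rw [(conformableGreen.hasDerivAt_rpow_one_sub_mul_deriv hα hg hgc ht).deriv, mul_neg,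
    mul_left_comm, rpow_one_sub_mul_rpow_sub_one ht.1, mul_one]

theorem conjugate_bvp_solution (α β : ℝ) (hα : 0 < α) (hα1 : α ≤ 1)
    (hβ : 0 < β) (hβ1 : β ≤ 1)
    (h : ℝ → ℝ) (hcont : ContinuousOn h (Set.Icc 0 1))
    (G : ℝ → ℝ → ℝ)
    (hG : ∀ t s, G t s =
      if t ≤ s then (1 / α) * t ^ α * (1 - s ^ α)
      else (1 / α) * s ^ α * (1 - t ^ α))
    (x : ℝ → ℝ)
    (hx : ∀ t, x t = ∫ s in (0:ℝ)..1, G t s * h s * s ^ (β - 1)) :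
    x 0 = 0 ∧ x 1 = 0 ∧
    ∀ t ∈ Set.Ioo (0:ℝ) 1,
      t ^ (1 - β) * deriv (fun τ => τ ^ (1 - α) * deriv x τ) t = -h t :=
  conjugate_bvp_solution_general α β hα hβ h hcont G hG x hx
end

section
/- Let 0 < α, β ≤ 1 and 0 < τ < 1 with τ^β > α/(α+β). For s ∈ [0,τ] and 0 ≤ t ≤ s, with u(t,s) = [(α+β)t^α s^β − α t^{α+β}]/(αβ(α+β)) and x₀(s) = s^{α+β}/(α(α+β)), the ratio satisfies u(t,s)/x₀(s) ≥ (t^α/(β τ^{α+β}))[(α+β)τ^β − α t^β]. -/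
/-!
Dividing out, `u(t,s)/x₀(s) = (t^α/β) · ((α+β)s^β − α t^β)/s^{α+β}`, so the claim says that
`r ↦ ((α+β)r^β − α t^β)/r^{α+β}` does not increase from `r = s` to `r = τ`. Cross-multiplied,
the `t`-term enters as `α t^β (τ^{α+β} − s^{α+β}) ≤ α s^β (τ^{α+β} − s^{α+β})`, so the worst case is
`t = s`, which is the weighted AM–GM inequality `(α+β) s^α τ^β ≤ α s^{α+β} + β τ^{α+β}`.
-/

open Real

theorem add_mul_rpow_mul_rpow_le_s18 {a b α β : ℝ} (ha : 0 ≤ a) (hb : 0 ≤ b) (hα : 0 ≤ α)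
    (hβ : 0 ≤ β) (hαβ : 0 < α + β) :
    (α + β) * (a ^ α * b ^ β) ≤ α * a ^ (α + β) + β * b ^ (α + β) := by
  have hamgm := geom_mean_le_arith_mean2_weighted (div_nonneg hα hαβ.le)
    (div_nonneg hβ hαβ.le) (rpow_nonneg ha (α + β)) (rpow_nonneg hb (α + β))
    (by field_simp)
  rw [← rpow_mul ha, ← rpow_mul hb, mul_div_cancel₀ _ hαβ.ne', mul_div_cancel₀ _ hαβ.ne']
    at hamgm
  calc (α + β) * (a ^ α * b ^ β)
      ≤ (α + β) * (α / (α + β) * a ^ (α + β) + β / (α + β) * b ^ (α + β)) := by gcongr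
    _ = α * a ^ (α + β) + β * b ^ (α + β) := by field_simp

theorem div_rpow_add_le_of_le {α β c s τ : ℝ} (hα : 0 ≤ α) (hβ : 0 ≤ β) (hαβ : 0 < α + β)
    (hs : 0 < s) (hsτ : s ≤ τ) (hc : c ≤ α * s ^ β) :
    ((α + β) * τ ^ β - c) / τ ^ (α + β) ≤ ((α + β) * s ^ β - c) / s ^ (α + β) := by
  have hτ : 0 < τ := hs.trans_le hsτ
  have hsβ : 0 < s ^ β := rpow_pos_of_pos hs β
  have hpow : s ^ (α + β) ≤ τ ^ (α + β) := rpow_le_rpow hs.le hsτ hαβ.le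
  have hamgm := add_mul_rpow_mul_rpow_le_s18 hs.le hτ.le hα hβ hαβ
  rw [div_le_div_iff₀ (rpow_pos_of_pos hτ _) (rpow_pos_of_pos hs _), rpow_add hs]
  rw [rpow_add hs] at hpow hamgm
  nlinarith [mul_le_mul_of_nonneg_left hamgm hsβ.le,
    mul_le_mul_of_nonneg_right hc (sub_nonneg.2 hpow)]

theorem case_i_ratio_bound_general (α β τ : ℝ) (hα : 0 < α)
    (hβ : 0 < β)
    (u : ℝ → ℝ → ℝ)
    (hu : ∀ t s, u t s =
      ((α + β) * t ^ α * s ^ β - α * t ^ (α + β)) / (α * β * (α + β))) :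
    ∀ s t : ℝ, 0 ≤ s → s ≤ τ → 0 ≤ t → t ≤ s →
      (t ^ α / (β * τ ^ (α + β))) * ((α + β) * τ ^ β - α * t ^ β) ≤
        u t s / (s ^ (α + β) / (α * (α + β))) := by
  intro s t hs0 hsτ ht0 hts
  have hαβ : 0 < α + β := add_pos hα hβ
  rcases hs0.eq_or_lt with rfl | hs
  · obtain rfl : t = 0 := le_antisymm hts ht0
    simp [zero_rpow hα.ne', zero_rpow hαβ.ne']
  have hratio : u t s / (s ^ (α + β) / (α * (α + β))) =
      t ^ α / β * (((α + β) * s ^ β - α * t ^ β) / s ^ (α + β)) := by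
    rw [hu, rpow_add' ht0 hαβ.ne']
    field_simp
  have hmono := div_rpow_add_le_of_le hα.le hβ.le hαβ hs hsτ
    (mul_le_mul_of_nonneg_left (rpow_le_rpow ht0 hts hβ.le) hα.le)
  calc (t ^ α / (β * τ ^ (α + β))) * ((α + β) * τ ^ β - α * t ^ β)
      = t ^ α / β * (((α + β) * τ ^ β - α * t ^ β) / τ ^ (α + β)) := by ring
    _ ≤ _ := by rw [hratio]; gcongr

theorem case_i_ratio_bound (α β τ : ℝ) (hα : 0 < α) (hα1 : α ≤ 1)
    (hβ : 0 < β) (hβ1 : β ≤ 1) (hτ0 : 0 < τ) (hτ1 : τ < 1)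
    (hτ : α / (α + β) < τ ^ β)
    (u : ℝ → ℝ → ℝ)
    (hu : ∀ t s, u t s =
      ((α + β) * t ^ α * s ^ β - α * t ^ (α + β)) / (α * β * (α + β))) :
    ∀ s t : ℝ, 0 ≤ s → s ≤ τ → 0 ≤ t → t ≤ s →
      (t ^ α / (β * τ ^ (α + β))) * ((α + β) * τ ^ β - α * t ^ β) ≤
        u t s / (s ^ (α + β) / (α * (α + β))) :=
  case_i_ratio_bound_general α β τ hα hβ u hu
end
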